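/- arXiv:1806.08160 — 2 statements merged into one kernel-verified Lean document; each statement's English description precedes it below -/
import Mathlib

section
/- The function I_b^δ : ℝ → [0,∞] defined piecewise by I_b^δ(d) = -δ(d-b)²/(8d) for d ≤ -b, I_b^δ(d) = δb/2 for |d| < b, I_b^δ(d) = 0 for d = b, and I_b^δ(d) = δ(2d-b)/2 for d > b, is lower semicontinuous on ℝ. -/
theorem stmt_1 (b δ : ℝ) (hb : 0 < b) (hδ : 0 < δ) :
    LowerSemicontinuous (fun d : ℝ =>
      if d ≤ -b then -δ * (d - b)^2 / (8 * d)
      else if |d| < b then δ * b / 2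
      else if d = b then 0
      else δ * (2 * d - b) / 2) := by
  set f : ℝ → ℝ := fun d : ℝ =>
      if d ≤ -b then -δ * (d - b)^2 / (8 * d)
      else if |d| < b then δ * b / 2
      else if d = b then 0
      else δ * (2 * d - b) / 2 with hf
  intro x y hy
  rcases lt_trichotomy x (-b) with hx | hx | hx
  · -- x < -b : f agrees with smooth g near x
    have hx0 : x ≠ 0 := by nlinarith
    have hg : ContinuousAt (fun d : ℝ => -δ * (d - b)^2 / (8 * d)) x := by
      apply ContinuousAt.div
      · fun_prop
      · fun_prop
      · simpa using hx0
    have h1 : ∀ᶠ d in nhds x, y < -δ * (d - b)^2 / (8 * d) := by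
      have hyx : y < -δ * (x - b)^2 / (8 * x) := by
        have : f x = -δ * (x - b)^2 / (8 * x) := by
          simp [hf, le_of_lt hx]
        rwa [this] at hy
      exact hg (lt_mem_nhds hyx)
    have h2 : ∀ᶠ d in nhds x, d < -b := eventually_lt_nhds hx
    filter_upwards [h1, h2] with d hd1 hd2
    simpa [hf, le_of_lt hd2] using hd1
  · -- x = -b
    subst hx
    have hfx : f (-b) = δ * b / 2 := by
      have h1 : (-b : ℝ) ≤ -b := le_refl _
      have hb0 : (-b : ℝ) ≠ 0 := by linarith
      rw [hf]
      simp only [h1, if_true]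
      field_simp
      ring
    rw [hfx] at hy
    have hg : ContinuousAt (fun d : ℝ => -δ * (d - b)^2 / (8 * d)) (-b) := by
      apply ContinuousAt.div
      · fun_prop
      · fun_prop
      · simp; linarith
    have hgval : -δ * ((-b) - b)^2 / (8 * (-b)) = δ * b / 2 := by
      field_simp; ring
    have h1 : ∀ᶠ d in nhds (-b : ℝ), y < -δ * (d - b)^2 / (8 * d) := by
      refine hg (lt_mem_nhds ?_)
      show y < -δ * ((-b) - b)^2 / (8 * (-b))
      rw [hgval]; exact hy
    have h2 : ∀ᶠ d in nhds (-b : ℝ), d < b := eventually_lt_nhds (by linarith)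
    filter_upwards [h1, h2] with d hd1 hd2
    by_cases hd : d ≤ -b
    · simpa [hf, hd] using hd1
    · have habs : |d| < b := abs_lt.mpr ⟨by linarith, hd2⟩
      simpa [hf, hd, habs] using hy
  · rcases lt_trichotomy x b with hxb | hxb | hxb
    · -- -b < x < b
      have hfx : f x = δ * b / 2 := by
        have h1 : ¬ x ≤ -b := by linarith
        have h2 : |x| < b := abs_lt.mpr ⟨hx, hxb⟩
        simp [hf, h1, h2]
      rw [hfx] at hy
      have h1 : ∀ᶠ d in nhds x, -b < d := eventually_gt_nhds hx
      have h2 : ∀ᶠ d in nhds x, d < b := eventually_lt_nhds hxb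
      filter_upwards [h1, h2] with d hd1 hd2
      have habs : |d| < b := abs_lt.mpr ⟨hd1, hd2⟩
      simpa [hf, not_le.mpr hd1, habs] using hy
    · -- x = b
      have h2b : ¬ |b| < b := by simp [abs_of_pos hb]
      have h1b : ¬ (b:ℝ) ≤ -b := by linarith
      have hfx : f x = 0 := by
        rw [hxb, hf]; simp [h1b, h2b]
      rw [hfx] at hy
      have h1 : ∀ᶠ d in nhds x, 0 < d := eventually_gt_nhds (by linarith)
      filter_upwards [h1] with d hd1
      have hnle : ¬ d ≤ -b := by linarith
      by_cases habs : |d| < b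
      · have : f d = δ * b / 2 := by simp [hf, hnle, habs]
        rw [this]; nlinarith
      · by_cases hdb : d = b
        · have : f d = 0 := by rw [hdb, hf]; simp [h1b, h2b]
          rw [this]; linarith
        · have hdgt : b < d := by
            rcases (abs_lt.not.mp habs) with h
            push_neg at h
            rcases le_or_gt b d with hle | hlt
            · exact lt_of_le_of_ne hle (Ne.symm hdb)
            · exfalso
              have := h (by linarith)
              linarith
          have : f d = δ * (2 * d - b) / 2 := by simp [hf, hnle, habs, hdb]
          rw [this]; nlinarith
    · -- x > b
      have hfx : f x = δ * (2 * x - b) / 2 := by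
        have h1 : ¬ x ≤ -b := by linarith
        have h2 : ¬ |x| < b := by
          rw [abs_lt]; push_neg; intro; linarith
        have h3 : x ≠ b := ne_of_gt hxb
        simp [hf, h1, h2, h3]
      rw [hfx] at hy
      have hg : ContinuousAt (fun d : ℝ => δ * (2 * d - b) / 2) x := by fun_prop
      have h1 : ∀ᶠ d in nhds x, y < δ * (2 * d - b) / 2 := hg (lt_mem_nhds hy)
      have h2 : ∀ᶠ d in nhds x, b < d := eventually_gt_nhds hxb
      filter_upwards [h1, h2] with d hd1 hd2
      have hnle : ¬ d ≤ -b := by linarith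
      have habs : ¬ |d| < b := by rw [abs_lt]; push_neg; intro; linarith
      have hdb : d ≠ b := ne_of_gt hd2
      simpa [hf, hnle, habs, hdb] using hd1
end

section
/- The function I_b^δ defined piecewise by I_b^δ(d) = -δ(d-b)²/(8d) for d ≤ -b, δb/2 for |d| < b, 0 for d = b, and δ(2d-b)/2 for d > b, has compact level sets: for every c ≥ 0, the set {d ∈ ℝ : I_b^δ(d) ≤ c} is compact. -/
/-!
Off the point `d = b`, where it drops to `0`, the rate function agrees with the continuous
function `max (L (min d (-b))) (δ * (2 * d - b) / 2)`, `L` being its left branch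
`-δ (d - b)² / (8 d)`. So for `c ≥ 0` the sublevel set `{I ≤ c}` is a closed sublevel set of a
continuous function plus the point `b`. It is bounded because the right branch grows linearly
and `L d ≥ -δ d / 8` for `d < 0`.
-/

open Set

section

variable {b δ : ℝ}

noncomputable def cirRate (b δ d : ℝ) : ℝ :=
  if d ≤ -b then -δ * (d - b) ^ 2 / (8 * d)
  else if |d| < b then δ * b / 2
  else if d = b then 0
  else δ * (2 * d - b) / 2

/-- The left branch is frozen at `d = -b`, where it takes the plateau value `δ b / 2`. -/
noncomputable def cirRateCont (b δ d : ℝ) : ℝ :=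
  max (-δ * (min d (-b) - b) ^ 2 / (8 * min d (-b))) (δ * (2 * d - b) / 2)

lemma continuous_cirRateCont (hb : 0 < b) : Continuous (cirRateCont b δ) := by
  have hmin : ∀ d, 8 * min d (-b) ≠ 0 := fun d => by
    have := min_le_right d (-b)
    linarith
  unfold cirRateCont
  exact (Continuous.div (by fun_prop) (by fun_prop) hmin).max (by fun_prop)

lemma neg_mul_div_le_neg_mul_sub_sq_div (hδ : 0 ≤ δ) (hb : 0 ≤ b) {d : ℝ} (hd : d < 0) :
    -δ * d / 8 ≤ -δ * (d - b) ^ 2 / (8 * d) := by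
  rw [le_div_iff_of_neg (by linarith)]
  nlinarith [mul_nonneg hδ (mul_nonneg hb (by linarith : 0 ≤ -d)), mul_nonneg hδ (sq_nonneg b)]

lemma cirRate_self (hb : 0 < b) : cirRate b δ b = 0 := by
  simp [cirRate, abs_of_pos hb, show ¬ b ≤ -b by linarith]

lemma cirRate_eq_cirRateCont (hb : 0 < b) (hδ : 0 < δ) {d : ℝ} (hd : d ≠ b) :
    cirRate b δ d = cirRateCont b δ d := by
  have hplateau : -δ * (-b - b) ^ 2 / (8 * -b) = δ * b / 2 := by
    field_simp
    ring
  unfold cirRate cirRateCont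
  split_ifs with hleft hmid
  · have hL := neg_mul_div_le_neg_mul_sub_sq_div hδ.le hb.le (by linarith : d < 0)
    rw [min_eq_left hleft, max_eq_left (by nlinarith)]
  · rw [abs_lt] at hmid
    rw [min_eq_right (by linarith), hplateau, max_eq_left (by nlinarith)]
  · have hbd : b < d := by
      rw [not_lt, le_abs] at hmid
      rcases hmid with h | h
      · exact lt_of_le_of_ne h (Ne.symm hd)
      · linarith
    rw [min_eq_right (by linarith), hplateau, max_eq_right (by nlinarith)]

lemma setOf_cirRate_le (hb : 0 < b) (hδ : 0 < δ) {c : ℝ} (hc : 0 ≤ c) :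
    {d | cirRate b δ d ≤ c} = insert b {d | cirRateCont b δ d ≤ c} := by
  ext d
  by_cases hd : d = b
  · subst hd
    simp [cirRate_self hb, hc]
  · simp [hd, cirRate_eq_cirRateCont hb hδ hd]

lemma setOf_cirRateCont_le_subset (hb : 0 < b) (hδ : 0 < δ) {c : ℝ} (hc : 0 ≤ c) :
    {d | cirRateCont b δ d ≤ c} ⊆ Icc (-(b + 8 * c / δ)) (c / δ + b / 2) := by
  intro d (hd : max _ _ ≤ c)
  have hleft := le_of_max_le_left hd
  have hright := le_of_max_le_right hd
  constructor
  · by_cases hdb : d ≤ -b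
    · rw [min_eq_left hdb] at hleft
      have hL := neg_mul_div_le_neg_mul_sub_sq_div hδ.le hb.le (by linarith : d < 0)
      have : -d ≤ 8 * c / δ := by
        rw [le_div_iff₀ hδ]
        linarith
      linarith
    · have : 0 ≤ 8 * c / δ := by positivity
      linarith
  · rw [div_add' _ _ _ hδ.ne', le_div_iff₀ hδ]
    linarith

lemma isCompact_setOf_cirRate_le (hb : 0 < b) (hδ : 0 < δ) {c : ℝ} (hc : 0 ≤ c) :
    IsCompact {d | cirRate b δ d ≤ c} := by
  rw [setOf_cirRate_le hb hδ hc]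
  have hclosed : IsClosed {d | cirRateCont b δ d ≤ c} :=
    isClosed_le (continuous_cirRateCont hb) continuous_const
  exact (isCompact_Icc.of_isClosed_subset hclosed
    (setOf_cirRateCont_le_subset hb hδ hc)).insert b

end

theorem stmt_2 (b δ : ℝ) (hb : 0 < b) (hδ : 0 < δ) (c : ℝ) (hc : 0 ≤ c) :
    IsCompact {d : ℝ |
      (if d ≤ -b then -δ * (d - b)^2 / (8 * d)
      else if |d| < b then δ * b / 2
      else if d = b then 0
      else δ * (2 * d - b) / 2) ≤ c} :=
  isCompact_setOf_cirRate_le hb hδ hc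
end
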